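/- arXiv:2211.02170 — 7 statements merged into one kernel-verified Lean document; each statement's English description precedes it below -/
import Mathlib

section
/- Let π be a partition with mark m = m(π). Then len(β(π)) = m − 1, and either len(α(π)) = m − 1 or len(α(π)) = m. -/
/-- A partition: a non-increasing list of positive integers. -/
def IsPartition (π : List ℕ) : Prop :=
  π.Pairwise (· ≥ ·) ∧ ∀ x ∈ π, 0 < x

/-- A partition of `n` into distinct positive parts, listed in (strictly) decreasing order. -/
def DisPart (n : ℕ) (γ : List ℕ) : Prop :=
  γ.Pairwise (· > ·) ∧ (∀ x ∈ γ, 0 < x) ∧ γ.sum = n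

/-- A partition of `n` into exactly `k` distinct positive parts. -/
def DisPartK (n k : ℕ) (γ : List ℕ) : Prop :=
  DisPart n γ ∧ γ.length = k

/-- `β` majorizes `α`. -/
def Majorizes (β α : List ℕ) : Prop :=
  β.sum = α.sum ∧ ∀ k ≤ min α.length β.length, (α.take k).sum ≤ (β.take k).sum

/-- α(π): the parts `d_i − i + 1` for 1-based indices `i` with `d_i ≥ i`. -/
def alphaOf (π : List ℕ) : List ℕ :=
  (List.range π.length).filterMap
    (fun i => if i + 1 ≤ π.getD i 0 then some (π.getD i 0 - i) else none)

/-- Number of boxes of the Ferrers diagram strictly below the diagonal in (1-based) column `j`. -/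
def betaColCount (π : List ℕ) (j : ℕ) : ℕ :=
  ((List.range π.length).filter (fun i => decide (j ≤ i ∧ j ≤ π.getD i 0))).length

/-- β(π): the positive column counts below the main diagonal, in decreasing order. -/
def betaOf (π : List ℕ) : List ℕ :=
  ((List.range π.length).map (fun j => betaColCount π (j + 1))).filter (fun c => c != 0)

/-- The mark (modified Durfee number) `m(π) = max {i : d_i ≥ i − 1}` (1-based indices). -/
noncomputable def mark (π : List ℕ) : ℕ :=
  sSup {i : ℕ | 1 ≤ i ∧ i ≤ π.length ∧ i ≤ π.getD (i - 1) 0 + 1}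

def IsIndepSet {V : Type*} (G : SimpleGraph V) (s : Set V) : Prop :=
  s.Pairwise (fun v w => ¬ G.Adj v w)

/-- `(K, S)` is a KS-partition of `G`. -/
def IsKS {V : Type*} [Fintype V] (G : SimpleGraph V) (K S : Finset V) : Prop :=
  (∀ v, v ∈ K ∨ v ∈ S) ∧ Disjoint K S ∧ G.IsClique (K : Set V) ∧ IsIndepSet G (S : Set V)

def IsSplit {V : Type*} [Fintype V] (G : SimpleGraph V) : Prop :=
  ∃ K S, IsKS G K S

noncomputable def cliqueNum {V : Type*} [Fintype V] (G : SimpleGraph V) : ℕ :=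
  sSup {n | ∃ s : Finset V, G.IsNClique n s}

noncomputable def indepNum {V : Type*} [Fintype V] (G : SimpleGraph V) : ℕ :=
  sSup {n | ∃ s : Finset V, IsIndepSet G (s : Set V) ∧ s.card = n}

/-- A balanced split graph: some KS-partition is simultaneously K-max and S-max. -/
def IsBalancedSplit {V : Type*} [Fintype V] (G : SimpleGraph V) : Prop :=
  IsSplit G ∧ ∃ K S, IsKS G K S ∧ K.card = cliqueNum G ∧ S.card = indepNum G

/-- An unbalanced split graph. -/
def IsUnbalancedSplit {V : Type*} [Fintype V] (G : SimpleGraph V) : Prop :=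
  IsSplit G ∧ ¬ ∃ K S, IsKS G K S ∧ K.card = cliqueNum G ∧ S.card = indepNum G

/-- `π` is the degree sequence of `G` (degrees in non-increasing order). -/
def HasDegSeq {V : Type*} [Fintype V] (G : SimpleGraph V) [DecidableRel G.Adj]
    (π : List ℕ) : Prop :=
  π.Pairwise (· ≥ ·) ∧ (π : Multiset ℕ) = Finset.univ.val.map (fun v => G.degree v)

def NoIsolated {V : Type*} [Fintype V] (G : SimpleGraph V) [DecidableRel G.Adj] : Prop :=
  ∀ v, 0 < G.degree v

def IsThreshold {V : Type*} [Fintype V] (G : SimpleGraph V) : Prop :=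
  ∃ (t : ℝ) (a : V → ℝ), 0 < t ∧ (∀ v, 0 < a v) ∧
    ∀ s : Finset V, (IsIndepSet G (s : Set V) ↔ ∑ v ∈ s, a v ≤ t)

noncomputable def chromNum {V : Type*} [Fintype V] (G : SimpleGraph V) : ℕ :=
  sInf {n | G.Colorable n}

def IsNG {V : Type*} [Fintype V] (G : SimpleGraph V) : Prop :=
  chromNum G + chromNum Gᶜ = Fintype.card V + 1

def ngA {V : Type*} [Fintype V] (G : SimpleGraph V) [DecidableRel G.Adj] : Set V :=
  {v | G.degree v = chromNum G - 1}

def IsNG1 {V : Type*} [Fintype V] (G : SimpleGraph V) [DecidableRel G.Adj] : Prop :=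
  IsNG G ∧ G.IsClique (ngA G)

def IsNG2 {V : Type*} [Fintype V] (G : SimpleGraph V) [DecidableRel G.Adj] : Prop :=
  IsNG G ∧ IsIndepSet G (ngA G)

def IsNG3 {V : Type*} [Fintype V] (G : SimpleGraph V) [DecidableRel G.Adj] : Prop :=
  IsNG G ∧ Nonempty ((G.induce (ngA G)) ≃g SimpleGraph.cycleGraph 5)

/-- `[α|β]` is an S-block for the integer `n`. -/
def IsSBlock (n : ℕ) (α β : List ℕ) : Prop :=
  DisPart n α ∧ DisPart n β ∧ Majorizes β α ∧
    (α.length = β.length ∨ α.length = β.length + 1)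

/-- `[α₁|β₁] ⪰ [α₂|β₂]` in the block order. -/
def BlockMaj (α₁ β₁ α₂ β₂ : List ℕ) : Prop :=
  Majorizes α₁ α₂ ∧ Majorizes β₂ β₁

/-- τ'_k(n) = (n − C(k,2), k−1, k−2, …, 2, 1). -/
def tauMax (n k : ℕ) : List ℕ :=
  (n - Nat.choose k 2) :: ((List.range (k - 1)).reverse.map (· + 1))

/-- τ_k(n): parts (k−i+1)+q+1 for 1 ≤ i ≤ r and (k−i+1)+q for r < i ≤ k,
where n − C(k+1,2) = qk + r, 0 ≤ r < k. -/
def tauMin (n k : ℕ) : List ℕ :=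
  (List.range k).map
    (fun i => (k - i) + (n - Nat.choose (k + 1) 2) / k +
      (if i < (n - Nat.choose (k + 1) 2) % k then 1 else 0))

/-- `β` covers `α` in `Dis(n)`. -/
def CoversDis (n : ℕ) (β α : List ℕ) : Prop :=
  DisPart n α ∧ DisPart n β ∧ Majorizes β α ∧ β ≠ α ∧
    ¬ ∃ γ, DisPart n γ ∧ Majorizes β γ ∧ Majorizes γ α ∧ γ ≠ α ∧ γ ≠ β

/-- `[α₁|β₁]` covers `[α₂|β₂]` in `S-Block(n)`. -/
def BlockCovers (n : ℕ) (α₁ β₁ α₂ β₂ : List ℕ) : Prop :=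
  IsSBlock n α₁ β₁ ∧ IsSBlock n α₂ β₂ ∧ BlockMaj α₁ β₁ α₂ β₂ ∧ ¬(α₁ = α₂ ∧ β₁ = β₂) ∧
    ¬ ∃ α β, IsSBlock n α β ∧ BlockMaj α₁ β₁ α β ∧ BlockMaj α β α₂ β₂ ∧
      ¬(α = α₁ ∧ β = β₁) ∧ ¬(α = α₂ ∧ β = β₂)

/-- `[α|β]` is a threshold-covered block: member of TC(n). -/
def InTC (n : ℕ) (α β : List ℕ) : Prop :=
  IsSBlock n α β ∧ CoversDis n β α

def IsLubDis (n : ℕ) (a b c : List ℕ) : Prop :=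
  Majorizes c a ∧ Majorizes c b ∧
    ∀ d, DisPart n d → Majorizes d a → Majorizes d b → Majorizes d c

def IsGlbDis (n : ℕ) (a b c : List ℕ) : Prop :=
  Majorizes a c ∧ Majorizes b c ∧
    ∀ d, DisPart n d → Majorizes a d → Majorizes b d → Majorizes c d

/- The mark `m` is the length of the initial run of indices `i` (0-based) with `i ≤ d_i`, and both
the rows contributing to `α(π)` and the nonempty columns of `β(π)` form initial runs of indices,
since `π` is non-increasing. Column `j + 1` below the diagonal is nonempty exactly when
`j + 1 ≤ d_{j+1}`, i.e. when `j + 2 ≤ m`; and row `i` contributes to `α(π)` when `i + 1 ≤ d_i`,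
which is implied by `i + 1 < m` and implies `i < m`. -/

theorem List.Pairwise.antitone_getD {α : Type*} [Preorder α] {l : List α} {d : α}
    (hl : l.Pairwise (· ≥ ·)) (hd : ∀ x ∈ l, d ≤ x) : Antitone (l.getD · d) := by
  intro i j hij
  dsimp only
  by_cases hj : j < l.length
  · rw [List.getD_eq_getElem _ _ hj, List.getD_eq_getElem _ _ (hij.trans_lt hj)]
    exact List.sortedGE_iff_getElem_ge_getElem_of_le.1 hl.sortedGE hij
  · rw [List.getD_eq_default _ _ (not_lt.1 hj)]
    by_cases hi : i < l.length
    · rw [List.getD_eq_getElem _ _ hi]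
      exact hd _ (List.getElem_mem hi)
    · rw [List.getD_eq_default _ _ (not_lt.1 hi)]

theorem Nat.exists_forall_iff_lt_of_antitone {p : ℕ → Prop} (hp : Antitone p) {L : ℕ}
    (hL : ∀ i, p i → i < L) : ∃ n ≤ L, ∀ i, p i ↔ i < n := by
  classical
  have hfails : ∃ i, ¬ p i := ⟨L, fun h => (hL L h).false⟩
  refine ⟨Nat.find hfails, Nat.find_min' hfails ((hL L).mt (lt_irrefl L)),
    fun i => ⟨fun hi => ?_, ?_⟩⟩
  · by_contra! hle
    exact Nat.find_spec hfails (hp hle hi)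
  · simpa using Nat.find_min hfails

theorem Nat.count_eq_of_forall_iff_lt {p : ℕ → Prop} [DecidablePred p] {n L : ℕ}
    (h : ∀ i, p i ↔ i < n) (hn : n ≤ L) : Nat.count p L = n := by
  obtain ⟨k, rfl⟩ := Nat.exists_eq_add_of_le hn
  rw [Nat.count_add, Nat.count_iff_forall.2 fun i hi => (h i).2 hi,
    Nat.count_iff_forall_not.2 fun i _ => by simp [h], Nat.add_zero]

theorem length_alphaOf (π : List ℕ) :
    (alphaOf π).length = Nat.count (fun i => i + 1 ≤ π.getD i 0) π.length := by
  rw [alphaOf, List.length_filterMap_eq_countP, Nat.count]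
  congr 1
  funext i
  split_ifs <;> simp_all

theorem length_betaOf (π : List ℕ) :
    (betaOf π).length = Nat.count (fun j => betaColCount π (j + 1) ≠ 0) π.length := by
  rw [betaOf, ← List.countP_eq_length_filter, List.countP_map, Nat.count]
  congr 1
  funext j
  simp [bne, beq_eq_decide]

theorem betaColCount_ne_zero_iff {π : List ℕ} (hπ : Antitone (π.getD · 0)) (j : ℕ) :
    betaColCount π j ≠ 0 ↔ j < π.length ∧ j ≤ π.getD j 0 := by
  rw [betaColCount, ← Nat.pos_iff_ne_zero, List.length_filter_pos_iff]
  simp only [List.mem_range, decide_eq_true_eq]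
  constructor
  · rintro ⟨i, hiL, hji, hjd⟩
    exact ⟨hji.trans_lt hiL, hjd.trans (hπ hji)⟩
  · rintro ⟨hjL, hjd⟩
    exact ⟨j, hjL, le_rfl, hjd⟩

theorem mark_eq_of_forall_iff_lt {π : List ℕ} {n : ℕ}
    (h : ∀ i, i < π.length ∧ i ≤ π.getD i 0 ↔ i < n) : mark π = n := by
  have hset : {i : ℕ | 1 ≤ i ∧ i ≤ π.length ∧ i ≤ π.getD (i - 1) 0 + 1} = Set.Icc 1 n := by
    ext i
    rcases i with _ | i
    · simp
    · simpa [Nat.succ_le_iff, Nat.add_one_le_iff] using h i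
  rw [mark, hset]
  rcases Nat.eq_zero_or_pos n with rfl | hn
  · simp
  · exact csSup_Icc hn

theorem stmt0_general (π : List ℕ) (hπ : IsPartition π) :
    (betaOf π).length = mark π - 1 ∧
      ((alphaOf π).length = mark π - 1 ∨ (alphaOf π).length = mark π) := by
  have hd : Antitone (π.getD · 0) := hπ.1.antitone_getD fun x _ => x.zero_le
  obtain ⟨M, hML, hM⟩ := Nat.exists_forall_iff_lt_of_antitone
    (p := fun i => i < π.length ∧ i ≤ π.getD i 0)
    (fun i j hij h => ⟨hij.trans_lt h.1, (hij.trans h.2).trans (hd hij)⟩) fun _ h => h.1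
  obtain ⟨A, hAL, hA⟩ := Nat.exists_forall_iff_lt_of_antitone
    (p := fun i => i + 1 ≤ π.getD i 0)
    (fun i j hij h => (Nat.add_le_add_right hij 1).trans (h.trans (hd hij))) fun i h => by
      by_contra! hi
      rw [List.getD_eq_default _ _ hi] at h
      omega
  have hAM : A ≤ M := by
    by_contra! hlt
    have hdiag := (hA M).2 hlt
    exact lt_irrefl M ((hM M).1 ⟨hlt.trans_le hAL, by omega⟩)
  have hMA : M - 1 ≤ A := by
    by_contra! hlt
    obtain ⟨-, hdiag⟩ := (hM (A + 1)).2 (by omega)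
    exact lt_irrefl A ((hA A).1 (hdiag.trans (hd A.le_succ)))
  have hβ : ∀ j, betaColCount π (j + 1) ≠ 0 ↔ j < M - 1 := fun j => by
    rw [betaColCount_ne_zero_iff hd, hM]
    omega
  rw [mark_eq_of_forall_iff_lt hM, length_betaOf, length_alphaOf,
    Nat.count_eq_of_forall_iff_lt hA hAL, Nat.count_eq_of_forall_iff_lt hβ (by omega)]
  omega

/-- If π is a partition with mark m = m(π), then len(β(π)) = m − 1, and
either len(α(π)) = m − 1 or len(α(π)) = m. -/
theorem stmt0 (π : List ℕ) (hπ : IsPartition π) (hne : π ≠ []) :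
    (betaOf π).length = mark π - 1 ∧
      ((alphaOf π).length = mark π - 1 ∨ (alphaOf π).length = mark π) :=
  stmt0_general π hπ
end

section
/- Every threshold graph with at least one vertex is a split graph, and moreover is an unbalanced split graph (it is not a balanced split graph). -/
/-
Only the pairwise form of the threshold condition matters: `u ≠ w` are adjacent iff
`t < a u + a w`. The vertices with `t < 2 a v` then form a clique and the others an independent
set. If some KS-partition `(K, S)` had `|K| = ω` and `|S| = α`, let `v ∈ K` have least weight.
Maximality of `S` gives `s ∈ S` adjacent to `v`, so `t < a v + a s`; maximality of `K` gives
`k ∈ K` not adjacent to `s`, so `a s + a k ≤ t`; hence `a k < a v`, contradicting the choice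
of `v`.
-/

open Finset

namespace SimpleGraph

variable {V : Type*} {G : SimpleGraph V}

theorem isIndepSet_pair_iff_of_ne {u w : V} (huw : u ≠ w) :
    G.IsIndepSet ({u, w} : Set V) ↔ ¬ G.Adj u w := by
  rw [SimpleGraph.isIndepSet_iff, Set.pairwise_pair]
  exact ⟨fun h => (h huw).1, fun h _ => ⟨h, fun h' => h h'.symm⟩⟩

end SimpleGraph

section KSPartition

variable {V : Type*} [Fintype V] {G : SimpleGraph V}

theorem cliqueNum_eq_cliqueNum : cliqueNum G = G.cliqueNum := rfl

theorem indepNum_eq_indepNum : indepNum G = G.indepNum := by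
  simp only [indepNum, SimpleGraph.indepNum, SimpleGraph.isNIndepSet_iff, IsIndepSet]

theorem one_le_cliqueNum [Nonempty V] : 1 ≤ cliqueNum G := by
  obtain ⟨v⟩ := ‹Nonempty V›
  simpa [cliqueNum_eq_cliqueNum] using
    SimpleGraph.IsClique.card_le_cliqueNum (t := {v}) (tc := by simp)

theorem exists_not_adj_of_card_eq_cliqueNum {K : Finset V} (hK : G.IsClique (K : Set V))
    (hcard : K.card = cliqueNum G) {s : V} (hs : s ∉ K) : ∃ k ∈ K, ¬ G.Adj s k := by
  classical
  by_contra! hadj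
  have hclique : G.IsClique ((insert s K : Finset V) : Set V) := by
    rw [coe_insert, SimpleGraph.isClique_insert]
    exact ⟨hK, fun k hk _ => hadj k hk⟩
  have := hclique.card_le_cliqueNum
  rw [card_insert_of_notMem hs, ← cliqueNum_eq_cliqueNum, hcard] at this
  omega

theorem exists_adj_of_card_eq_indepNum {S : Finset V} (hS : IsIndepSet G (S : Set V))
    (hcard : S.card = indepNum G) {v : V} (hv : v ∉ S) : ∃ s ∈ S, G.Adj v s := by
  have hK : Gᶜ.IsClique (S : Set V) := (G.isClique_compl).2 hS
  have hcard' : S.card = cliqueNum Gᶜ := by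
    rw [hcard, indepNum_eq_indepNum, cliqueNum_eq_cliqueNum, SimpleGraph.cliqueNum_compl]
  obtain ⟨s, hs, hnadj⟩ := exists_not_adj_of_card_eq_cliqueNum hK hcard' hv
  refine ⟨s, hs, ?_⟩
  by_contra h
  exact hnadj ((SimpleGraph.compl_adj G v s).2 ⟨(ne_of_mem_of_not_mem hs hv).symm, h⟩)

end KSPartition

theorem IsThreshold.exists_adj_iff_lt_add {V : Type*} [Fintype V] {G : SimpleGraph V}
    (h : IsThreshold G) :
    ∃ (t : ℝ) (a : V → ℝ), ∀ u w, u ≠ w → (G.Adj u w ↔ t < a u + a w) := by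
  classical
  obtain ⟨t, a, -, -, hiff⟩ := h
  refine ⟨t, a, fun u w huw => ?_⟩
  have hpair := hiff {u, w}
  rw [coe_pair, sum_pair huw] at hpair
  rw [← not_le, ← hpair]
  exact (G.isIndepSet_pair_iff_of_ne huw).not_left.symm

section PairwiseThreshold

variable {V : Type*} [Fintype V] {G : SimpleGraph V} {t : ℝ} {a : V → ℝ}
  (hadj : ∀ u w, u ≠ w → (G.Adj u w ↔ t < a u + a w))
include hadj

theorem isKS_of_adj_iff_lt_add :
    IsKS G ({v | t < a v + a v} : Finset V) ({v | ¬ t < a v + a v} : Finset V) := by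
  refine ⟨fun v => ?_, disjoint_filter_filter_not _ _ _, ?_, ?_⟩
  · simp only [mem_filter, mem_univ, true_and]
    exact em _
  · intro u hu w hw huw
    simp only [coe_filter, mem_univ, true_and, Set.mem_ofPred_eq] at hu hw
    exact (hadj u w huw).2 (by linarith)
  · intro u hu w hw huw
    simp only [coe_filter, mem_univ, true_and, Set.mem_ofPred_eq] at hu hw
    exact fun h => by linarith [(hadj u w huw).1 h]

theorem not_exists_isKS_card_eq_of_adj_iff_lt_add [Nonempty V] :
    ¬ ∃ K S, IsKS G K S ∧ K.card = cliqueNum G ∧ S.card = indepNum G := by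
  rintro ⟨K, S, ⟨-, hdisj, hK, hS⟩, hKcard, hScard⟩
  have hKne : K.Nonempty := card_pos.1 (hKcard ▸ one_le_cliqueNum)
  obtain ⟨v, hvK, hvmin⟩ := K.exists_min_image a hKne
  obtain ⟨s, hsS, hvs⟩ :=
    exists_adj_of_card_eq_indepNum hS hScard (disjoint_left.1 hdisj hvK)
  have hsK : s ∉ K := disjoint_right.1 hdisj hsS
  obtain ⟨k, hkK, hsk⟩ := exists_not_adj_of_card_eq_cliqueNum hK hKcard hsK
  have hvs' : t < a v + a s := (hadj v s hvs.ne).1 hvs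
  have hsk' : a s + a k ≤ t :=
    not_lt.1 fun h => hsk ((hadj s k (ne_of_mem_of_not_mem hkK hsK).symm).2 h)
  linarith [hvmin k hkK]

end PairwiseThreshold

/-- Every threshold graph with at least one vertex is a split graph, and is
an unbalanced split graph (it is not a balanced split graph). -/
theorem stmt3 {V : Type} [Fintype V] [Nonempty V] (G : SimpleGraph V)
    (h : IsThreshold G) :
    IsSplit G ∧ IsUnbalancedSplit G ∧ ¬ IsBalancedSplit G := by
  obtain ⟨t, a, hadj⟩ := h.exists_adj_iff_lt_add
  have hsplit : IsSplit G := ⟨_, _, isKS_of_adj_iff_lt_add hadj⟩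
  have hunbalanced := not_exists_isKS_card_eq_of_adj_iff_lt_add hadj
  exact ⟨hsplit, ⟨hsplit, hunbalanced⟩, fun hb => hunbalanced hb.2⟩
end

section
/- If k ≥ 1 and n ≥ binom(k+1, 2), then τ_k(n) ∈ Dis_k(n) and τ_k(n) ⪯ α for every α ∈ Dis_k(n); that is, τ_k(n) is the unique minimum element of Dis_k(n) under majorization. -/
/-!
Shift a strictly decreasing list `γ` of length `k` by the staircase: `i ↦ γᵢ + i` is
non-increasing on `[0, k)`, and when `γ` sums to `n` it has total `n + C(k, 2) = k Q + r`, where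
`Q = k + q`. The same shift turns `τ_k(n)` into the balanced sequence `Q + 1, …, Q + 1, Q, …, Q`
with `r` entries `Q + 1`. A non-increasing sequence with total `k Q + r` dominates the balanced one
in every prefix sum: if its `j`-th term exceeds `Q`, the first `j` terms already sum to at least
`j (Q + 1)`; otherwise each of the last `k - j` terms is at most `Q`, leaving at least `j Q + r` for
the first `j`. Uniqueness of the minimum is antisymmetry of majorization on lists of equal length.
-/

open Finset

namespace List

lemma sum_take_eq_sum_range_getD {M : Type*} [AddCommMonoid M] (l : List M) (j : ℕ) :
    (l.take j).sum = ∑ i ∈ Finset.range j, l.getD i 0 := by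
  induction j with
  | zero => simp
  | succ j ih =>
    rw [Finset.sum_range_succ, ← ih]
    rcases lt_or_ge j l.length with hj | hj
    · rw [sum_take_succ l j hj, getD_eq_getElem _ _ hj]
    · rw [take_of_length_le hj, take_of_length_le (by omega), getD_eq_default _ _ hj, add_zero]

lemma sum_eq_sum_range_getD {M : Type*} [AddCommMonoid M] (l : List M) :
    l.sum = ∑ i ∈ Finset.range l.length, l.getD i 0 := by
  rw [← sum_take_eq_sum_range_getD, take_length]

lemma antitoneOn_getD_add_of_pairwise_gt {l : List ℕ} (hl : l.Pairwise (· > ·)) :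
    AntitoneOn (fun i => l.getD i 0 + i) (Set.Iio l.length) := by
  refine antitoneOn_of_succ_le Set.ordConnected_Iio fun i _ _ hi => ?_
  simp only [Order.succ_eq_add_one, Set.mem_Iio] at hi ⊢
  have hlt := pairwise_iff_getElem.1 hl i (i + 1) (by omega) hi (by omega)
  rw [getD_eq_getElem _ _ hi, getD_eq_getElem _ _ (by omega)]
  omega

end List

lemma Majorizes.antisymm {α β : List ℕ} (hαβ : Majorizes α β) (hβα : Majorizes β α)
    (hlen : α.length = β.length) : α = β :=
  List.eq_of_sum_take_eq hlen fun j hj =>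
    le_antisymm (hβα.2 j (by simpa [hlen] using hj)) (hαβ.2 j (by simpa [hlen] using hj))

lemma sum_range_ite_lt (j r : ℕ) : ∑ i ∈ range j, (if i < r then 1 else 0) = min j r := by
  induction j with
  | zero => simp
  | succ j ih => rw [sum_range_succ, ih]; split_ifs <;> omega

theorem sum_range_balanced_le_of_antitoneOn {f : ℕ → ℕ} {k q r j : ℕ}
    (hf : AntitoneOn f (Set.Iio k)) (hsum : ∑ i ∈ range k, f i = k * q + r) (hj : j ≤ k) :
    ∑ i ∈ range j, (q + if i < r then 1 else 0) ≤ ∑ i ∈ range j, f i := by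
  rw [sum_add_distrib, sum_const, card_range, smul_eq_mul, sum_range_ite_lt]
  rcases j.eq_zero_or_pos with rfl | hj₀
  · simp
  rcases le_or_gt (f (j - 1)) q with hq | hq
  · have htail : ∑ i ∈ Ico j k, f i ≤ (k - j) * q := by
      simpa using sum_le_card_nsmul (Ico j k) f q fun i hi => by
        obtain ⟨hji, hik⟩ := mem_Ico.1 hi
        exact (hf (Set.mem_Iio.2 (by omega)) (Set.mem_Iio.2 hik) (by omega)).trans hq
    have hsplit := sum_range_add_sum_Ico f hj
    have hkq : k * q = j * q + (k - j) * q := by rw [← add_mul, Nat.add_sub_cancel' hj]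
    omega
  · have hhead : j * (q + 1) ≤ ∑ i ∈ range j, f i := by
      simpa using card_nsmul_le_sum (range j) f (q + 1) fun i hi => by
        have hij := mem_range.1 hi
        exact hq.trans_le (hf (Set.mem_Iio.2 (by omega)) (Set.mem_Iio.2 (by omega)) (by omega))
    rw [mul_add_one] at hhead
    omega

lemma add_sum_range_id_eq {n k : ℕ} (hn : (k + 1).choose 2 ≤ n) :
    n + ∑ i ∈ range k, i =
      k * (k + (n - (k + 1).choose 2) / k) + (n - (k + 1).choose 2) % k := by
  have hchoose : (k + 1).choose 2 = k + ∑ i ∈ range k, i := by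
    rw [Nat.choose_succ_succ', Nat.choose_one_right, sum_range_id, Nat.choose_two_right]
  have hgauss := sum_range_id_mul_two k
  have hsq : k * (k - 1) + k = k * k := by cases k <;> simp [Nat.mul_succ]
  have hdiv := Nat.div_add_mod (n - (k + 1).choose 2) k
  rw [mul_add]
  omega

section tauMin

variable {n k : ℕ}

lemma tauMin_length (n k : ℕ) : (tauMin n k).length = k := by simp [tauMin]

lemma tauMin_getD_add (n : ℕ) {i : ℕ} (hi : i < k) :
    (tauMin n k).getD i 0 + i =
      k + (n - (k + 1).choose 2) / k + if i < (n - (k + 1).choose 2) % k then 1 else 0 := by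
  rw [List.getD_eq_getElem _ _ (by rwa [tauMin_length])]
  simp only [tauMin, List.getElem_map, List.getElem_range]
  omega

lemma tauMin_pairwise_gt (n k : ℕ) : (tauMin n k).Pairwise (· > ·) := by
  refine List.pairwise_iff_getElem.2 fun i j hi hj hij => ?_
  simp only [tauMin, List.length_map, List.length_range, List.getElem_map,
    List.getElem_range] at hi hj ⊢
  split_ifs <;> omega

lemma tauMin_pos (n k : ℕ) : ∀ x ∈ tauMin n k, 0 < x := by
  simp only [tauMin, List.mem_map, List.mem_range]
  rintro x ⟨i, hi, rfl⟩
  exact (Nat.sub_pos_of_lt hi).trans_le ((Nat.le_add_right _ _).trans (Nat.le_add_right _ _))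

lemma tauMin_sum (hk : 1 ≤ k) (hn : (k + 1).choose 2 ≤ n) : (tauMin n k).sum = n := by
  have hr : (n - (k + 1).choose 2) % k < k := Nat.mod_lt _ hk
  have hshift : (tauMin n k).sum + ∑ i ∈ range k, i = n + ∑ i ∈ range k, i := by
    rw [add_sum_range_id_eq hn, List.sum_eq_sum_range_getD, tauMin_length, ← sum_add_distrib,
      sum_congr rfl fun i hi => tauMin_getD_add n (mem_range.1 hi), sum_add_distrib, sum_const,
      card_range, smul_eq_mul, sum_range_ite_lt, min_eq_right hr.le]
  omega

theorem majorizes_tauMin (hk : 1 ≤ k) (hn : (k + 1).choose 2 ≤ n) {γ : List ℕ}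
    (hγ : γ.Pairwise (· > ·)) (hsum : γ.sum = n) (hlen : γ.length = k) :
    Majorizes γ (tauMin n k) := by
  refine ⟨by rw [hsum, tauMin_sum hk hn], fun j hj => ?_⟩
  rw [tauMin_length, hlen, min_self] at hj
  have hγshift : ∑ i ∈ range k, (γ.getD i 0 + i) =
      k * (k + (n - (k + 1).choose 2) / k) + (n - (k + 1).choose 2) % k := by
    rw [sum_add_distrib, ← hlen, ← List.sum_eq_sum_range_getD, hsum, hlen, add_sum_range_id_eq hn]
  suffices ∑ i ∈ range j, ((tauMin n k).getD i 0 + i) ≤ ∑ i ∈ range j, (γ.getD i 0 + i) by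
    rw [List.sum_take_eq_sum_range_getD, List.sum_take_eq_sum_range_getD]
    simpa only [sum_add_distrib, add_le_add_iff_right] using this
  calc ∑ i ∈ range j, ((tauMin n k).getD i 0 + i)
      = ∑ i ∈ range j, (k + (n - (k + 1).choose 2) / k +
          if i < (n - (k + 1).choose 2) % k then 1 else 0) :=
        sum_congr rfl fun i hi => tauMin_getD_add n (by rw [mem_range] at hi; omega)
    _ ≤ ∑ i ∈ range j, (γ.getD i 0 + i) :=
        sum_range_balanced_le_of_antitoneOn (hlen ▸ List.antitoneOn_getD_add_of_pairwise_gt hγ)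
          hγshift hj

end tauMin

/-- For k ≥ 1 and n ≥ C(k+1,2), τ_k(n) is the unique minimum element of
Dis_k(n) under majorization. -/
theorem stmt6 (n k : ℕ) (hk : 1 ≤ k) (hn : Nat.choose (k + 1) 2 ≤ n) :
    DisPartK n k (tauMin n k) ∧ (∀ α, DisPartK n k α → Majorizes α (tauMin n k)) ∧
      ∀ μ, DisPartK n k μ → (∀ α, DisPartK n k α → Majorizes α μ) → μ = tauMin n k := by
  have hτ : DisPartK n k (tauMin n k) :=
    ⟨⟨tauMin_pairwise_gt n k, tauMin_pos n k, tauMin_sum hk hn⟩, tauMin_length n k⟩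
  have hmin : ∀ α, DisPartK n k α → Majorizes α (tauMin n k) := fun α hα =>
    majorizes_tauMin hk hn hα.1.1 hα.1.2.2 hα.2
  refine ⟨hτ, hmin, fun μ hμ hμmin => (hmin μ hμ).antisymm (hμmin _ hτ) ?_⟩
  rw [hμ.2, tauMin_length]
end

section
/- Let n, j, k be positive integers with k > j and n ≥ binom(k+1, 2). Then τ_k(n) ⪯ τ_j(n) and τ'_k(n) ⪯ τ'_j(n) in the majorization order. -/
/-!
Write `N = n - C(m+1, 2)`. Counting from `0`, the `i`-th part `(m - i) + q + [i < r]` of `τ_m(n)`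
is the single floor `(m - i) + ⌊(N + m - 1 - i) / m⌋`; passing from `m` to `m + 1` lowers it by
`⌊(N - 1 - i) / m⌋ - ⌊(N - 1 - i) / (m + 1)⌋ ≥ 0`, so `τ_j(n)` dominates `τ_k(n)` part by part.
For `τ'`, the first `t + 1` parts of `τ'_m(n)` sum to `n - C(m - t, 2)`, which decreases in `m`.
-/

open Finset

variable {n m i j k t : ℕ}

lemma List.sum_take_map_range {M : Type*} [AddCommMonoid M] (f : ℕ → M) (h : t ≤ m) :
    (((List.range m).map f).take t).sum = ∑ i ∈ Finset.range t, f i := by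
  rw [← List.map_take, List.take_range, min_eq_left h]
  rfl

lemma Finset.sum_range_add_one_eq_choose (m : ℕ) :
    ∑ i ∈ range m, (i + 1) = (m + 1).choose 2 := by
  have h := Finset.sum_range_succ' (fun i => i) m
  rw [add_zero] at h
  rw [← h, Finset.sum_range_id, Nat.choose_two_right]

lemma Finset.sum_range_sub_eq_choose (m : ℕ) : ∑ i ∈ range m, (m - i) = (m + 1).choose 2 := by
  rw [← sum_range_add_one_eq_choose, ← Finset.sum_range_reflect]
  exact sum_congr rfl fun i hi => by have := mem_range.mp hi; omega

lemma Nat.div_add_ite_lt_mod (N : ℕ) (hi : i < m) :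
    N / m + (if i < N % m then 1 else 0) = (N + (m - 1 - i)) / m := by
  rw [Nat.add_div (by omega), Nat.div_eq_of_lt (by omega : m - 1 - i < m),
    Nat.mod_eq_of_lt (by omega : m - 1 - i < m)]
  have := Nat.mod_lt N (by omega : 0 < m)
  split_ifs <;> omega

def tauMinPart (n m i : ℕ) : ℕ :=
  (m - i) + (n - (m + 1).choose 2) / m + if i < (n - (m + 1).choose 2) % m then 1 else 0

lemma tauMin_eq_map_range (n m : ℕ) : tauMin n m = (List.range m).map (tauMinPart n m) := rfl

@[simp]
lemma length_tauMin (n m : ℕ) : (tauMin n m).length = m := by simp [tauMin]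

lemma tauMinPart_eq (n : ℕ) (hi : i < m) :
    tauMinPart n m i = (m - i) + (n - (m + 1).choose 2 + (m - 1 - i)) / m := by
  rw [tauMinPart, add_assoc, Nat.div_add_ite_lt_mod _ hi]

lemma sum_tauMin (hm : 0 < m) (hn : (m + 1).choose 2 ≤ n) : (tauMin n m).sum = n := by
  rw [← List.take_length (l := tauMin n m), length_tauMin, tauMin_eq_map_range,
    List.sum_take_map_range _ le_rfl]
  simp only [tauMinPart, sum_add_distrib, sum_range_sub_eq_choose, sum_const, card_range,
    smul_eq_mul, sum_boole]
  set N := n - (m + 1).choose 2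
  have hfilter : {x ∈ range m | x < N % m} = range (N % m) := by
    ext x
    simp only [mem_filter, mem_range]
    have := Nat.mod_lt N hm
    omega
  rw [hfilter, card_range, Nat.cast_id]
  have := Nat.div_add_mod N m
  omega

lemma tauMinPart_succ_le (hi : i < m) (hn : (m + 2).choose 2 ≤ n) :
    tauMinPart n (m + 1) i ≤ tauMinPart n m i := by
  have hpascal : (m + 2).choose 2 = (m + 1).choose 2 + (m + 1) := by
    rw [Nat.choose_succ_succ', Nat.choose_one_right, add_comm]
  rw [tauMinPart_eq n (by omega : i < m + 1), tauMinPart_eq n hi]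
  have h1 : n - (m + 2).choose 2 + (m + 1 - 1 - i) = n - (m + 1).choose 2 - 1 - i := by omega
  have h2 : n - (m + 1).choose 2 + (m - 1 - i) = (n - (m + 1).choose 2 - 1 - i) + m := by omega
  rw [h1, h2, Nat.add_div_right _ (by omega)]
  have := Nat.div_le_div_left (by omega : m ≤ m + 1) (by omega : 0 < m)
    (a := n - (m + 1).choose 2 - 1 - i)
  omega

lemma tauMinPart_le_of_le (hi : i < j) (hjk : j ≤ k) (hn : (k + 1).choose 2 ≤ n) :
    tauMinPart n k i ≤ tauMinPart n j i := by
  induction k, hjk using Nat.le_induction with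
  | base => rfl
  | succ m hjm ih =>
    exact (tauMinPart_succ_le (by omega) hn).trans
      (ih ((Nat.choose_le_choose 2 m.succ.le_succ).trans hn))

lemma majorizes_tauMin_s7 (hj : 0 < j) (hjk : j ≤ k) (hn : (k + 1).choose 2 ≤ n) :
    Majorizes (tauMin n j) (tauMin n k) := by
  refine ⟨?_, fun t ht => ?_⟩
  · rw [sum_tauMin hj ((Nat.choose_le_choose 2 (by omega)).trans hn), sum_tauMin (by omega) hn]
  · simp only [length_tauMin] at ht
    rw [tauMin_eq_map_range, tauMin_eq_map_range, List.sum_take_map_range _ (by omega),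
      List.sum_take_map_range _ (by omega)]
    exact sum_le_sum fun i hi => tauMinPart_le_of_le (by simp at hi; omega) hjk hn

lemma List.sum_map_add_one_reverse_range (m : ℕ) :
    ((List.range m).reverse.map (· + 1)).sum = (m + 1).choose 2 := by
  rw [List.map_reverse, List.sum_reverse]
  exact sum_range_add_one_eq_choose m

lemma List.sum_take_map_add_one_reverse_range_add_choose (t m : ℕ) :
    (((List.range m).reverse.map (· + 1)).take t).sum + (m - t + 1).choose 2 =
      (m + 1).choose 2 := by
  have hdrop : ((List.range m).reverse.map (· + 1)).drop t =
      (List.range (m - t)).reverse.map (· + 1) := by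
    rw [← List.map_drop, List.drop_reverse, List.length_range, List.take_range,
      min_eq_left (Nat.sub_le _ _)]
  rw [← sum_map_add_one_reverse_range (m - t), ← hdrop, List.sum_take_add_sum_drop,
    sum_map_add_one_reverse_range]

lemma length_tauMax (hm : 0 < m) : (tauMax n m).length = m := by
  simp only [tauMax, List.length_cons, List.length_map, List.length_reverse, List.length_range]
  omega

lemma sum_tauMax (hm : 0 < m) (hn : m.choose 2 ≤ n) : (tauMax n m).sum = n := by
  rw [tauMax, List.sum_cons, List.sum_map_add_one_reverse_range, Nat.sub_add_cancel hm]
  omega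

lemma sum_take_succ_tauMax_add_choose (ht : t < m) (hn : m.choose 2 ≤ n) :
    ((tauMax n m).take (t + 1)).sum + (m - t).choose 2 = n := by
  have := List.sum_take_map_add_one_reverse_range_add_choose t (m - 1)
  rw [show m - 1 - t + 1 = m - t by omega, Nat.sub_add_cancel (by omega : 1 ≤ m)] at this
  rw [tauMax, List.take_succ_cons, List.sum_cons]
  omega

lemma majorizes_tauMax (hj : 0 < j) (hjk : j ≤ k) (hn : k.choose 2 ≤ n) :
    Majorizes (tauMax n j) (tauMax n k) := by
  have hjn : j.choose 2 ≤ n := (Nat.choose_le_choose 2 hjk).trans hn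
  refine ⟨by rw [sum_tauMax hj hjn, sum_tauMax (by omega) hn], fun t ht => ?_⟩
  rw [length_tauMax (by omega), length_tauMax hj] at ht
  obtain _ | t := t
  · simp
  · have hk_prefix := sum_take_succ_tauMax_add_choose (by omega : t < k) hn
    have hj_prefix := sum_take_succ_tauMax_add_choose (by omega : t < j) hjn
    have := Nat.choose_le_choose 2 (by omega : j - t ≤ k - t)
    omega

/-- For positive integers j < k with n ≥ C(k+1,2), τ_k(n) ⪯ τ_j(n) and
τ'_k(n) ⪯ τ'_j(n) under majorization. -/
theorem stmt7 (n j k : ℕ) (hj : 1 ≤ j) (hjk : j < k) (hn : Nat.choose (k + 1) 2 ≤ n) :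
    Majorizes (tauMin n j) (tauMin n k) ∧ Majorizes (tauMax n j) (tauMax n k) :=
  ⟨majorizes_tauMin_s7 hj hjk.le hn,
    majorizes_tauMax hj hjk.le ((Nat.choose_le_choose 2 k.le_succ).trans hn)⟩
end

section
/- A partition π is the degree sequence of some split graph with no isolated vertices if and only if [α(π)|β(π)] is an S-block, i.e., if and only if α(π) and β(π) are partitions of the same integer and β(π) ⪰ α(π). -/
/-!
Write `d i = π.getD i 0` (indices from `0`) and let `D` be the Durfee number, the least `i` with
`d i ≤ i`. Counting the boxes of the Ferrers diagram below the diagonal column by column, the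
partial sums of `β(π)` are `∑_{i<t} i + ∑_{i≥t} min t (d i)` for `t ≤ D`, while those of `α(π)`
are `∑_{i<t} (d i - i)`. Hence the `t`-th majorization inequality is the Erdős–Gallai inequality
at `t`, and the difference of the totals is the Hammer–Simeone excess
`∑_{i<D} d i - D (D - 1) - ∑_{i≥D} d i`. So `β(π) ⪰ α(π)` says that the Erdős–Gallai
inequalities hold up to `D` and that the excess at `D` vanishes.

Every degree sequence satisfies the Erdős–Gallai inequalities, and in a split graph with clique
`K` the excess at `#K` is nonnegative. The excess increases up to `D` and decreases afterwards,
so it is nonnegative at `D`, while the Erdős–Gallai inequality at `D` makes it nonpositive.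

Conversely, make the `D` largest-degree vertices a clique and the others an independent set. The
remaining edges form a 0-1 matrix with row sums `d i - (D - 1)` and column sums `d i`, and the
two conditions above are exactly the Gale–Ryser conditions for it. Such a matrix exists: start
from the matrix whose columns are filled from the top and move ones from rows with a surplus to
later rows with a deficit.
-/

open Finset

lemma List.Pairwise.getD_le_getD {l : List ℕ} (hl : l.Pairwise (· ≥ ·)) {i j : ℕ}
    (hij : i ≤ j) : l.getD j 0 ≤ l.getD i 0 := by
  by_cases hj : j < l.length
  · rw [List.getD_eq_getElem _ _ hj, List.getD_eq_getElem _ _ (hij.trans_lt hj)]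
    exact hl.sortedGE.antitone_get (show (⟨i, hij.trans_lt hj⟩ : Fin _) ≤ ⟨j, hj⟩ from hij)
  · rw [List.getD_eq_default _ _ (not_lt.mp hj)]
    exact Nat.zero_le _

lemma List.getD_tail {α : Type*} (l : List α) (j : ℕ) (a : α) :
    l.tail.getD j a = l.getD (j + 1) a := by
  simp

lemma List.sum_map_range {M : Type*} [AddCommMonoid M] (f : ℕ → M) (n : ℕ) :
    ((List.range n).map f).sum = ∑ i ∈ Finset.range n, f i := by
  rw [Finset.sum_eq_multiset_sum]
  rfl

lemma List.filterMap_ite_eq_map_filter {α β : Type*} (l : List α) (p : α → Prop)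
    [DecidablePred p] (f : α → β) :
    l.filterMap (fun a => if p a then some (f a) else none) = (l.filter p).map f := by
  induction l with
  | nil => rfl
  | cons a l ih => by_cases h : p a <;> simp [h, ih]

lemma List.filter_range_eq_range {p : ℕ → Bool} {m n : ℕ} (hmn : m ≤ n)
    (hp : ∀ i < n, p i ↔ i < m) : (List.range n).filter p = List.range m :=
  List.Pairwise.eq_of_mem_iff (List.pairwise_lt_range.filter p) List.pairwise_lt_range fun i => by
    simp only [List.mem_filter, List.mem_range]
    exact ⟨fun ⟨hi, h⟩ => (hp i hi).1 h,
      fun hi => ⟨hi.trans_le hmn, (hp i (hi.trans_le hmn)).2 hi⟩⟩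

lemma List.pairwise_gt_map_range {α : Type*} [LT α] {f : ℕ → α} {n : ℕ}
    (hf : ∀ i j, i < j → j < n → f j < f i) : ((List.range n).map f).Pairwise (· > ·) := by
  rw [List.pairwise_map]
  exact List.pairwise_lt_range.imp_of_mem fun _ hj hij => hf _ _ hij (List.mem_range.1 hj)

def durfee (π : List ℕ) : ℕ :=
  Nat.find (⟨π.length, by simp⟩ : ∃ i, π.getD i 0 ≤ i)

lemma durfee_le_length (π : List ℕ) : durfee π ≤ π.length :=
  Nat.find_le (by simp)

lemma getD_durfee_le (π : List ℕ) : π.getD (durfee π) 0 ≤ durfee π :=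
  Nat.find_spec (⟨π.length, by simp⟩ : ∃ i, π.getD i 0 ≤ i)

lemma lt_getD_of_lt_durfee {π : List ℕ} {i : ℕ} (hi : i < durfee π) : i < π.getD i 0 :=
  not_le.mp (Nat.find_min (⟨π.length, by simp⟩ : ∃ i, π.getD i 0 ≤ i) hi)

namespace IsPartition

variable {π : List ℕ}

lemma getD_pos (hπ : IsPartition π) {i : ℕ} (hi : i < π.length) : 0 < π.getD i 0 :=
  hπ.2 _ (List.getD_eq_getElem _ _ hi ▸ List.getElem_mem hi)

lemma tail (hπ : IsPartition π) : IsPartition π.tail :=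
  ⟨hπ.1.sublist (List.tail_sublist π), fun x hx => hπ.2 x (List.mem_of_mem_tail hx)⟩

lemma lt_durfee_iff (hπ : IsPartition π) {i : ℕ} : i < durfee π ↔ i < π.getD i 0 := by
  refine ⟨lt_getD_of_lt_durfee, fun hi => not_le.mp fun hD => ?_⟩
  have := hπ.1.getD_le_getD hD
  have := getD_durfee_le π
  omega

lemma durfee_le_getD (hπ : IsPartition π) {i : ℕ} (hi : i < durfee π) :
    durfee π ≤ π.getD i 0 := by
  have h1 := lt_getD_of_lt_durfee (show durfee π - 1 < durfee π by omega)
  have h2 := hπ.1.getD_le_getD (show i ≤ durfee π - 1 by omega)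
  omega

lemma getD_le_durfee (hπ : IsPartition π) {i : ℕ} (hi : durfee π ≤ i) :
    π.getD i 0 ≤ durfee π :=
  (hπ.1.getD_le_getD hi).trans (getD_durfee_le π)

lemma durfee_tail_le (hπ : IsPartition π) : durfee π.tail ≤ durfee π :=
  Nat.find_le (by simpa using hπ.getD_le_durfee (Nat.le_succ _))

lemma durfee_le_durfee_tail_add_one (hπ : IsPartition π) : durfee π ≤ durfee π.tail + 1 := by
  by_contra! h
  have := lt_getD_of_lt_durfee h
  exact lt_irrefl _ (hπ.tail.lt_durfee_iff.2 (by rw [List.getD_tail]; omega))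

end IsPartition

lemma betaColCount_eq_card (π : List ℕ) (j : ℕ) :
    betaColCount π j = #{i ∈ range π.length | j ≤ i ∧ j ≤ π.getD i 0} := rfl

lemma sum_betaColCount_eq (π : List ℕ) (t : ℕ) :
    ∑ j ∈ range t, betaColCount π (j + 1) =
      ∑ i ∈ range π.length, min t (min i (π.getD i 0)) := by
  simp_rw [betaColCount_eq_card, card_filter]
  rw [sum_comm]
  refine sum_congr rfl fun i _ => ?_
  rw [← card_filter, ← card_range (min t (min i (π.getD i 0)))]
  congr 1
  ext j
  simp only [mem_filter, mem_range]
  omega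

lemma sum_betaColCount_eq_of_le_durfee (π : List ℕ) {t : ℕ} (ht : t ≤ durfee π) :
    ∑ j ∈ range t, betaColCount π (j + 1) =
      ∑ i ∈ range t, i + ∑ i ∈ Ico t π.length, min t (π.getD i 0) := by
  rw [sum_betaColCount_eq, ← sum_range_add_sum_Ico _ (ht.trans (durfee_le_length π))]
  congr 1 <;> refine sum_congr rfl fun i hi => ?_
  · rw [mem_range] at hi
    have := lt_getD_of_lt_durfee (show i < durfee π by omega)
    omega
  · rw [mem_Ico] at hi
    omega

lemma sum_sub_add_sum_id (π : List ℕ) {t : ℕ} (ht : t ≤ durfee π) :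
    ∑ i ∈ range t, (π.getD i 0 - i) + ∑ i ∈ range t, i = ∑ i ∈ range t, π.getD i 0 := by
  rw [← sum_add_distrib]
  refine sum_congr rfl fun i hi => ?_
  have := lt_getD_of_lt_durfee ((mem_range.1 hi).trans_le ht)
  omega

namespace IsPartition

variable {π : List ℕ}

lemma alphaOf_eq (hπ : IsPartition π) :
    alphaOf π = (List.range (durfee π)).map fun i => π.getD i 0 - i := by
  rw [alphaOf, List.filterMap_ite_eq_map_filter,
    List.filter_range_eq_range (durfee_le_length π) fun i _ => ?_]
  simp [hπ.lt_durfee_iff]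

lemma betaColCount_ne_zero_iff (hπ : IsPartition π) {j : ℕ} :
    betaColCount π (j + 1) ≠ 0 ↔ j < durfee π.tail := by
  rw [hπ.tail.lt_durfee_iff, List.getD_tail, betaColCount_eq_card, Ne, card_eq_zero, ← Ne,
    ← nonempty_iff_ne_empty]
  constructor
  · rintro ⟨i, hi⟩
    simp only [mem_filter, mem_range] at hi
    have := hπ.1.getD_le_getD hi.2.1
    omega
  · intro h
    refine ⟨j + 1, mem_filter.2 ⟨mem_range.2 ?_, le_rfl, h⟩⟩
    by_contra! hL
    rw [List.getD_eq_default _ _ hL] at h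
    omega

lemma betaOf_eq (hπ : IsPartition π) :
    betaOf π = (List.range (durfee π.tail)).map fun j => betaColCount π (j + 1) := by
  have hle : durfee π.tail ≤ π.length := (durfee_le_length _).trans (by simp)
  rw [betaOf, List.filter_map, List.filter_range_eq_range hle fun j _ => ?_]
  simp [hπ.betaColCount_ne_zero_iff]

lemma betaColCount_lt_betaColCount (hπ : IsPartition π) {i j : ℕ} (hij : i < j)
    (hj : j < durfee π.tail) : betaColCount π (j + 1) < betaColCount π (i + 1) := by
  have hdj : j < π.getD j 0 := by
    have := hπ.tail.lt_durfee_iff.1 hj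
    rw [List.getD_tail] at this
    have := hπ.1.getD_le_getD (Nat.le_add_right j 1)
    omega
  have hjL : j < π.length := by
    by_contra! hL
    rw [List.getD_eq_default _ _ hL] at hdj
    omega
  simp only [betaColCount_eq_card]
  refine card_lt_card ((ssubset_iff_of_subset fun k hk => ?_).2 ⟨j, ?_, ?_⟩)
  · simp only [mem_filter] at hk ⊢
    exact ⟨hk.1, by omega, by omega⟩
  · simp only [mem_filter, mem_range]
    omega
  · simp [mem_filter]

lemma disPart_alphaOf (hπ : IsPartition π) : DisPart (alphaOf π).sum (alphaOf π) := by
  refine ⟨?_, ?_, rfl⟩ <;> rw [hπ.alphaOf_eq]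
  · refine List.pairwise_gt_map_range fun i j hij hj => ?_
    have := lt_getD_of_lt_durfee hj
    have := hπ.1.getD_le_getD hij.le
    omega
  · simp only [List.mem_map, List.mem_range]
    rintro _ ⟨i, hi, rfl⟩
    have := lt_getD_of_lt_durfee hi
    omega

lemma betaOf_pos (hπ : IsPartition π) : ∀ x ∈ betaOf π, 0 < x := by
  simp only [hπ.betaOf_eq, List.mem_map, List.mem_range]
  rintro _ ⟨j, hj, rfl⟩
  exact Nat.pos_of_ne_zero (hπ.betaColCount_ne_zero_iff.2 hj)

lemma betaOf_pairwise (hπ : IsPartition π) : (betaOf π).Pairwise (· > ·) := by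
  rw [hπ.betaOf_eq]
  exact List.pairwise_gt_map_range fun i j hij hj => hπ.betaColCount_lt_betaColCount hij hj

lemma length_alphaOf (hπ : IsPartition π) : (alphaOf π).length = durfee π := by
  simp [hπ.alphaOf_eq]

lemma length_betaOf (hπ : IsPartition π) : (betaOf π).length = durfee π.tail := by
  simp [hπ.betaOf_eq]

lemma sum_take_alphaOf (hπ : IsPartition π) {k : ℕ} (hk : k ≤ durfee π) :
    ((alphaOf π).take k).sum = ∑ i ∈ range k, (π.getD i 0 - i) := by
  rw [hπ.alphaOf_eq, ← List.map_take, List.take_range, min_eq_left hk, List.sum_map_range]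

lemma sum_take_betaOf (hπ : IsPartition π) {k : ℕ} (hk : k ≤ durfee π.tail) :
    ((betaOf π).take k).sum = ∑ j ∈ range k, betaColCount π (j + 1) := by
  rw [hπ.betaOf_eq, ← List.map_take, List.take_range, min_eq_left hk, List.sum_map_range]

lemma sum_alphaOf (hπ : IsPartition π) :
    (alphaOf π).sum = ∑ i ∈ range (durfee π), (π.getD i 0 - i) := by
  rw [hπ.alphaOf_eq, List.sum_map_range]

lemma sum_betaOf (hπ : IsPartition π) :
    (betaOf π).sum = ∑ j ∈ range (durfee π), betaColCount π (j + 1) := by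
  rw [hπ.betaOf_eq, List.sum_map_range]
  refine sum_subset (range_subset_range.2 hπ.durfee_tail_le) fun j _ hj => ?_
  by_contra h
  exact hj (mem_range.2 (hπ.betaColCount_ne_zero_iff.1 h))

end IsPartition

def ErdosGallaiAt (π : List ℕ) (t : ℕ) : Prop :=
  ∑ i ∈ range t, π.getD i 0 ≤ t * (t - 1) + ∑ i ∈ Ico t π.length, min t (π.getD i 0)

def splitExcess (π : List ℕ) (t : ℕ) : ℤ :=
  ↑(∑ i ∈ range t, π.getD i 0) - ↑(t * (t - 1)) - ↑(∑ i ∈ Ico t π.length, π.getD i 0)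

lemma sum_sub_le_sum_betaColCount_iff (π : List ℕ) {t : ℕ} (ht : t ≤ durfee π) :
    ∑ i ∈ range t, (π.getD i 0 - i) ≤ ∑ j ∈ range t, betaColCount π (j + 1) ↔
      ErdosGallaiAt π t := by
  have h1 := sum_sub_add_sum_id π ht
  have h2 := sum_range_id_mul_two t
  rw [sum_betaColCount_eq_of_le_durfee π ht, ErdosGallaiAt]
  omega

lemma splitExcess_succ (π : List ℕ) (t : ℕ) :
    splitExcess π (t + 1) = splitExcess π t + 2 * ((π.getD t 0 : ℤ) - t) := by
  have hIco : ∑ i ∈ Ico t π.length, π.getD i 0 =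
      π.getD t 0 + ∑ i ∈ Ico (t + 1) π.length, π.getD i 0 := by
    rcases lt_or_ge t π.length with h | h
    · exact sum_eq_sum_Ico_succ_bot h _
    · rw [Ico_eq_empty_of_le h, Ico_eq_empty_of_le (by omega), List.getD_eq_default _ _ h]
      rfl
  have hid : (t + 1) * (t + 1 - 1) = t * (t - 1) + 2 * t := by
    rw [← sum_range_id_mul_two, ← sum_range_id_mul_two, sum_range_succ]
    ring
  rw [splitExcess, splitExcess, sum_range_succ, hIco, hid]
  push_cast
  ring

namespace IsPartition

variable {π : List ℕ}

lemma sum_Ico_min_durfee (hπ : IsPartition π) :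
    ∑ i ∈ Ico (durfee π) π.length, min (durfee π) (π.getD i 0) =
      ∑ i ∈ Ico (durfee π) π.length, π.getD i 0 :=
  sum_congr rfl fun _ hi => min_eq_right (hπ.getD_le_durfee (mem_Ico.1 hi).1)

lemma splitExcess_durfee (hπ : IsPartition π) :
    splitExcess π (durfee π) = (alphaOf π).sum - (betaOf π).sum := by
  have h1 := sum_sub_add_sum_id π le_rfl
  have h2 := sum_range_id_mul_two (durfee π)
  rw [splitExcess, hπ.sum_alphaOf, hπ.sum_betaOf, sum_betaColCount_eq_of_le_durfee π le_rfl,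
    hπ.sum_Ico_min_durfee]
  omega

lemma splitExcess_durfee_nonpos (hπ : IsPartition π) (h : ErdosGallaiAt π (durfee π)) :
    splitExcess π (durfee π) ≤ 0 := by
  rw [ErdosGallaiAt, hπ.sum_Ico_min_durfee] at h
  rw [splitExcess]
  omega

lemma splitExcess_le_splitExcess_durfee (hπ : IsPartition π) (t : ℕ) :
    splitExcess π t ≤ splitExcess π (durfee π) := by
  rcases le_total t (durfee π) with h | h
  · refine Nat.decreasingInduction (motive := fun k _ => splitExcess π k ≤ _)
      (fun k hk ih => le_trans ?_ ih) le_rfl h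
    have := lt_getD_of_lt_durfee hk
    rw [splitExcess_succ]
    omega
  · refine Nat.le_induction (P := fun n _ => splitExcess π n ≤ _) le_rfl
      (fun n hn ih => le_trans ?_ ih) t h
    have := hπ.getD_le_durfee hn
    rw [splitExcess_succ]
    omega

lemma majorizes_betaOf_alphaOf_iff (hπ : IsPartition π) :
    Majorizes (betaOf π) (alphaOf π) ↔
      (∀ t ≤ durfee π, ErdosGallaiAt π t) ∧ splitExcess π (durfee π) = 0 := by
  rw [hπ.splitExcess_durfee, sub_eq_zero, Nat.cast_inj]
  have hlen : min (alphaOf π).length (betaOf π).length = durfee π.tail := by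
    rw [hπ.length_alphaOf, hπ.length_betaOf, min_eq_right hπ.durfee_tail_le]
  constructor
  · rintro ⟨hsum, hk⟩
    refine ⟨fun t ht => (sum_sub_le_sum_betaColCount_iff π ht).1 ?_, hsum.symm⟩
    rcases le_or_gt t (durfee π.tail) with h | h
    · have := hk t (hlen ▸ h)
      rwa [hπ.sum_take_alphaOf ht, hπ.sum_take_betaOf h] at this
    · have : t = durfee π := by
        have := hπ.durfee_le_durfee_tail_add_one
        omega
      rw [this, ← hπ.sum_alphaOf, ← hπ.sum_betaOf, hsum]
  · rintro ⟨hEG, hsum⟩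
    refine ⟨hsum.symm, fun k hk => ?_⟩
    rw [hlen] at hk
    have hkD := hk.trans hπ.durfee_tail_le
    rw [hπ.sum_take_alphaOf hkD, hπ.sum_take_betaOf hk]
    exact (sum_sub_le_sum_betaColCount_iff π hkD).2 (hEG k hkD)

lemma isSBlock_of_majorizes (hπ : IsPartition π) (h : Majorizes (betaOf π) (alphaOf π)) :
    IsSBlock (alphaOf π).sum (alphaOf π) (betaOf π) := by
  refine ⟨hπ.disPart_alphaOf, ⟨hπ.betaOf_pairwise, hπ.betaOf_pos, h.1⟩, h, ?_⟩
  have := hπ.durfee_tail_le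
  have := hπ.durfee_le_durfee_tail_add_one
  rw [hπ.length_alphaOf, hπ.length_betaOf]
  omega

end IsPartition

namespace SimpleGraph

variable {V : Type*} [Fintype V] [DecidableEq V] (G : SimpleGraph V) [DecidableRel G.Adj]

lemma sum_degree_eq (T : Finset V) :
    ∑ v ∈ T, G.degree v =
      ∑ v ∈ T, #{w ∈ T | G.Adj v w} + ∑ w ∈ Tᶜ, #{v ∈ T | G.Adj w v} := by
  have hdeg : ∀ v, G.degree v = ∑ w ∈ T, (if G.Adj v w then 1 else 0) +
      ∑ w ∈ Tᶜ, (if G.Adj v w then 1 else 0) := fun v => by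
    rw [sum_add_sum_compl, ← card_filter, ← card_neighborFinset_eq_degree,
      neighborFinset_eq_filter]
  simp_rw [hdeg, sum_add_distrib, card_filter]
  rw [sum_comm (s := T) (t := Tᶜ)]
  simp_rw [G.adj_comm]

lemma sum_degree_le (T : Finset V) :
    ∑ v ∈ T, G.degree v ≤ #T * (#T - 1) + ∑ w ∈ Tᶜ, min #T (G.degree w) := by
  rw [sum_degree_eq]
  gcongr with v hv w
  · refine (sum_le_card_nsmul _ _ (#T - 1) fun v hv => ?_).trans_eq (smul_eq_mul _ _)
    rw [← card_erase_of_mem hv]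
    exact card_le_card fun w hw => by
      simp only [mem_filter] at hw
      exact mem_erase.2 ⟨(G.ne_of_adj hw.2).symm, hw.1⟩
  · rw [← card_neighborFinset_eq_degree, neighborFinset_eq_filter]
    exact le_min (card_filter_le _ _) (card_le_card (filter_subset_filter _ (subset_univ T)))

lemma sum_degree_of_isKS {K S : Finset V} (h : IsKS G K S) :
    ∑ v ∈ K, G.degree v = #K * (#K - 1) + ∑ w ∈ Kᶜ, G.degree w := by
  obtain ⟨hcover, -, hK, hS⟩ := h
  rw [sum_degree_eq]
  congr 1
  · rw [← smul_eq_mul, ← sum_const]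
    refine sum_congr rfl fun v hv => ?_
    rw [← card_erase_of_mem hv]
    congr 1
    ext w
    simp only [mem_filter, mem_erase]
    exact ⟨fun hw => ⟨(G.ne_of_adj hw.2).symm, hw.1⟩,
      fun hw => ⟨hw.2, hK hv hw.2 (Ne.symm hw.1)⟩⟩
  · refine sum_congr rfl fun w hw => ?_
    rw [← card_neighborFinset_eq_degree, neighborFinset_eq_filter]
    congr 1
    ext u
    simp only [mem_filter, mem_univ, true_and, and_iff_right_iff_imp]
    intro hwu
    by_contra hu
    exact hS ((hcover w).resolve_left (mem_compl.1 hw)) ((hcover u).resolve_left hu)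
      (G.ne_of_adj hwu) hwu

end SimpleGraph

lemma sum_le_sum_range_card_of_antitone {f : ℕ → ℕ} (hf : Antitone f) (I : Finset ℕ) :
    ∑ i ∈ I, f i ≤ ∑ i ∈ range #I, f i := by
  set R := range #I
  have hcard : #(I \ R) = #(R \ I) := by
    have h1 := card_sdiff_add_card_inter I R
    have h2 := card_sdiff_add_card_inter R I
    rw [card_range, inter_comm] at h2
    omega
  have hIR : ∑ i ∈ I \ R, f i ≤ #(I \ R) • f #I :=
    sum_le_card_nsmul _ _ _ fun i hi => hf (not_lt.1 (mem_range.not.1 (mem_sdiff.1 hi).2))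
  have hRI : #(R \ I) • f #I ≤ ∑ i ∈ R \ I, f i :=
    card_nsmul_le_sum _ _ _ fun i hi => hf (mem_range.1 (mem_sdiff.1 hi).1).le
  rw [← sum_inter_add_sum_sdiff I R, ← sum_inter_add_sum_sdiff R I, inter_comm]
  rw [hcard] at hIR
  omega

def Equiv.toNatEmbedding {V : Type*} {n : ℕ} (e : V ≃ Fin n) : V ↪ ℕ :=
  e.toEmbedding.trans Fin.valEmbedding

lemma map_filter_toNatEmbedding {V : Type*} [Fintype V] {n : ℕ} (e : V ≃ Fin n)
    (p : ℕ → Prop) [DecidablePred p] :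
    ({v | p (e v)} : Finset V).map e.toNatEmbedding = {i ∈ range n | p i} := by
  ext i
  simp only [mem_map, mem_filter, mem_univ, true_and, mem_range, Equiv.toNatEmbedding,
    Function.Embedding.trans_apply, Equiv.coe_toEmbedding, Fin.valEmbedding_apply]
  constructor
  · rintro ⟨v, hv, rfl⟩
    exact ⟨(e v).isLt, hv⟩
  · rintro ⟨hi, hp⟩
    exact ⟨e.symm ⟨i, hi⟩, by simpa using hp, by simp⟩

namespace HasDegSeq

variable {V : Type*} [Fintype V] {G : SimpleGraph V} [DecidableRel G.Adj] {π : List ℕ}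

lemma exists_equiv (h : HasDegSeq G π) :
    ∃ e : V ≃ Fin π.length, ∀ v, G.degree v = π.getD (e v) 0 := by
  let e₀ := Fintype.equivFin V
  let f := fun i => OrderDual.toDual (G.degree (e₀.symm i))
  let σ := Tuple.sort f
  have hπ : List.ofFn (fun i => G.degree (e₀.symm (σ i))) = π := by
    refine List.Perm.eq_of_sortedGE ?_ h.1.sortedGE ?_
    · exact List.sortedGE_ofFn_iff.2 fun _ _ hab => Tuple.monotone_sort f hab
    · rw [← Multiset.coe_eq_coe, h.2, ← Fin.univ_val_map,
        ← Multiset.map_univ_val_equiv (σ.trans e₀.symm), Multiset.map_map]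
      rfl
  have hlen : Fintype.card V = π.length := by rw [← hπ, List.length_ofFn]
  refine ⟨e₀.trans (σ.symm.trans (finCongr hlen)), fun v => ?_⟩
  simp only [Equiv.trans_apply, finCongr_apply, Fin.val_cast]
  rw [← hπ, List.getD_eq_getElem _ _ (by simp), List.getElem_ofFn, Fin.eta,
    Equiv.apply_symm_apply, Equiv.symm_apply_apply]

lemma of_equiv (hπ : π.Pairwise (· ≥ ·)) (e : V ≃ Fin π.length)
    (he : ∀ v, G.degree v = π.getD (e v) 0) : HasDegSeq G π := by
  refine ⟨hπ, ?_⟩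
  have : (fun v => G.degree v) = (fun i : Fin π.length => π.getD i 0) ∘ e := funext he
  rw [this, ← Multiset.map_map, Multiset.map_univ_val_equiv, Fin.univ_val_map]
  simp

lemma sum_degree_eq_sum_map {e : V ≃ Fin π.length} (he : ∀ v, G.degree v = π.getD (e v) 0)
    (S : Finset V) : ∑ v ∈ S, G.degree v = ∑ i ∈ S.map e.toNatEmbedding, π.getD i 0 := by
  rw [sum_map]
  exact sum_congr rfl fun v _ => he v

theorem erdosGallaiAt [DecidableEq V] (h : HasDegSeq G π) {t : ℕ} (ht : t ≤ π.length) :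
    ErdosGallaiAt π t := by
  obtain ⟨e, he⟩ := h.exists_equiv
  set T : Finset V := {v | (e v : ℕ) < t}
  have hT : T.map e.toNatEmbedding = range t := by
    rw [map_filter_toNatEmbedding e (· < t)]
    ext i
    simp only [mem_filter, mem_range]
    omega
  have hTc : Tᶜ.map e.toNatEmbedding = Ico t π.length := by
    rw [compl_filter, map_filter_toNatEmbedding e (¬ · < t)]
    ext i
    simp only [mem_filter, mem_range, mem_Ico]
    omega
  have hcard : #T = t := by rw [← card_map e.toNatEmbedding, hT, card_range]
  have hmin : ∑ w ∈ Tᶜ, min #T (G.degree w) = ∑ i ∈ Ico t π.length, min t (π.getD i 0) := by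
    rw [hcard, ← hTc, sum_map]
    exact sum_congr rfl fun v _ => by rw [he]; rfl
  have := G.sum_degree_le T
  rwa [hmin, hcard, sum_degree_eq_sum_map he, hT] at this

theorem zero_le_splitExcess [DecidableEq V] (h : HasDegSeq G π) {K S : Finset V}
    (hKS : IsKS G K S) : 0 ≤ splitExcess π #K := by
  obtain ⟨e, he⟩ := h.exists_equiv
  have hK : #K ≤ π.length := (card_le_univ K).trans_eq (by simpa using Fintype.card_congr e)
  have htop : ∑ v ∈ K, G.degree v ≤ ∑ i ∈ range #K, π.getD i 0 := by
    rw [sum_degree_eq_sum_map he, ← card_map (f := e.toNatEmbedding)]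
    exact sum_le_sum_range_card_of_antitone (fun _ _ => h.1.getD_le_getD) _
  have htotal : ∑ v, G.degree v = ∑ i ∈ range π.length, π.getD i 0 := by
    simp_rw [he]
    rw [e.sum_comp (fun i => π.getD i 0), Fin.sum_univ_eq_sum_range (π.getD · 0)]
  have := G.sum_degree_of_isKS hKS
  have := sum_add_sum_compl K fun v => G.degree v
  have := sum_range_add_sum_Ico (fun i => π.getD i 0) hK
  rw [splitExcess]
  omega

end HasDegSeq

theorem IsPartition.majorizes_of_isSplit {π : List ℕ} (hπ : IsPartition π) {V : Type*}
    [Fintype V] {G : SimpleGraph V} [DecidableRel G.Adj] (hs : IsSplit G) (h : HasDegSeq G π) :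
    Majorizes (betaOf π) (alphaOf π) := by
  classical
  obtain ⟨K, S, hKS⟩ := hs
  have hEG : ∀ t ≤ durfee π, ErdosGallaiAt π t :=
    fun t ht => h.erdosGallaiAt (ht.trans (durfee_le_length π))
  refine hπ.majorizes_betaOf_alphaOf_iff.2 ⟨hEG, le_antisymm ?_ ?_⟩
  · exact hπ.splitExcess_durfee_nonpos (hEG _ le_rfl)
  · exact (h.zero_le_splitExcess hKS).trans (hπ.splitExcess_le_splitExcess_durfee _)

section GaleRyser

lemma exists_surplus_deficit {x r : ℕ → ℕ} {D : ℕ}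
    (hdom : ∀ t ≤ D, ∑ i ∈ range t, r i ≤ ∑ i ∈ range t, x i)
    (htot : ∑ i ∈ range D, x i = ∑ i ∈ range D, r i) (hne : ∃ i < D, x i ≠ r i) :
    ∃ a b, a < b ∧ b < D ∧ r a < x a ∧ x b < r b ∧
      ∀ t, a < t → t ≤ b → ∑ i ∈ range t, r i < ∑ i ∈ range t, x i := by
  obtain ⟨haD, ha⟩ := Nat.find_spec hne
  set a := Nat.find hne
  have hbelow : ∀ i < a, x i = r i := fun i hi => by
    by_contra h
    exact Nat.find_min hne hi ⟨by omega, h⟩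
  have hpre : ∑ i ∈ range a, x i = ∑ i ∈ range a, r i :=
    sum_congr rfl fun i hi => hbelow i (mem_range.1 hi)
  have hsurplus : r a < x a := by
    have := hdom (a + 1) (by omega)
    rw [sum_range_succ, sum_range_succ] at this
    omega
  have hdef : ∃ b < D, x b < r b := by
    by_contra! h
    have := sum_lt_sum (fun i hi => h i (mem_range.1 hi)) ⟨a, mem_range.2 haD, hsurplus⟩
    omega
  obtain ⟨hbD, hb⟩ := Nat.find_spec hdef
  set b := Nat.find hdef
  have hmid : ∀ i < b, i < D → r i ≤ x i := fun i hi hiD =>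
    not_lt.1 fun h => Nat.find_min hdef hi ⟨hiD, h⟩
  have hab : a < b := by
    by_contra! h
    rcases h.lt_or_eq with h | h
    · have := hbelow b h
      omega
    · rw [h] at hb
      omega
  refine ⟨a, b, hab, hbD, hsurplus, hb, fun t hat htb => ?_⟩
  have hIco : ∑ i ∈ Ico (a + 1) t, r i ≤ ∑ i ∈ Ico (a + 1) t, x i :=
    sum_le_sum fun i hi => by
      rw [mem_Ico] at hi
      exact hmid i (by omega) (by omega)
  rw [← sum_range_add_sum_Ico _ (show a + 1 ≤ t by omega),
    ← sum_range_add_sum_Ico _ (show a + 1 ≤ t by omega), sum_range_succ, sum_range_succ]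
  omega

lemma sum_card_eq_sum_card_filter_mem {s : ℕ} {M : ℕ → Finset ℕ} (hM : ∀ i, M i ⊆ range s)
    (D : ℕ) : ∑ i ∈ range D, #(M i) = ∑ j ∈ range s, #{i ∈ range D | j ∈ M i} := by
  have := sum_card_bipartiteAbove_eq_sum_card_bipartiteBelow (fun i j => j ∈ M i)
    (s := range D) (t := range s)
  simp only [bipartiteAbove, bipartiteBelow] at this
  rw [← this]
  refine sum_congr rfl fun i _ => ?_
  rw [filter_mem_eq_inter, inter_eq_right.2 (hM i)]

def moveEntry (M : ℕ → Finset ℕ) (a b j : ℕ) : ℕ → Finset ℕ :=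
  Function.update (Function.update M a ((M a).erase j)) b (insert j (M b))

section moveEntry

variable {M : ℕ → Finset ℕ} {a b j : ℕ}

lemma moveEntry_subset {s : ℕ} (hM : ∀ i, M i ⊆ range s) (ha : j ∈ M a) (i : ℕ) :
    moveEntry M a b j i ⊆ range s := by
  unfold moveEntry
  rcases eq_or_ne i b with rfl | hib
  · simpa using insert_subset (hM a ha) (hM i)
  · rw [Function.update_of_ne hib]
    rcases eq_or_ne i a with rfl | hia
    · simpa using (erase_subset _ _).trans (hM i)
    · simpa [Function.update_of_ne hia] using hM i

lemma card_moveEntry_add (hab : a ≠ b) (ha : j ∈ M a) (hb : j ∉ M b) (i : ℕ) :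
    #(moveEntry M a b j i) + (if i = a then 1 else 0) = #(M i) + (if i = b then 1 else 0) := by
  by_cases hib : i = b
  · subst hib
    simp [moveEntry, Ne.symm hab, card_insert_of_notMem hb]
  · by_cases hia : i = a
    · subst hia
      have := card_pos.2 ⟨j, ha⟩
      simp [moveEntry, hib, card_erase_of_mem ha]
      omega
    · simp [moveEntry, hia, hib]

lemma card_filter_mem_moveEntry {D : ℕ} (hab : a ≠ b) (ha : j ∈ M a) (hb : j ∉ M b)
    (haD : a < D) (hbD : b < D) (j' : ℕ) :
    #{i ∈ range D | j' ∈ moveEntry M a b j i} = #{i ∈ range D | j' ∈ M i} := by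
  by_cases hj : j' = j
  · subst hj
    have : {i ∈ range D | j' ∈ moveEntry M a b j' i} =
        insert b ({i ∈ range D | j' ∈ M i}.erase a) := by
      ext i
      rw [mem_filter, mem_insert, mem_erase, mem_filter]
      by_cases hib : i = b
      · subst hib
        simp [moveEntry, hbD]
      · by_cases hia : i = a
        · subst hia
          simp [moveEntry, hib]
        · simp [moveEntry, hia, hib]
    rw [this, card_insert_of_notMem (by simp [hb]),
      card_erase_add_one (mem_filter.2 ⟨mem_range.2 haD, ha⟩)]
  · refine congrArg card (filter_congr fun i _ => ?_)
    by_cases hib : i = b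
    · subst hib
      simp [moveEntry, hj]
    · by_cases hia : i = a
      · subst hia
        simp [moveEntry, hib, hj]
      · simp [moveEntry, hia, hib]

lemma sum_card_moveEntry_add (hab : a ≠ b) (ha : j ∈ M a) (hb : j ∉ M b) (t : ℕ) :
    ∑ i ∈ range t, #(moveEntry M a b j i) + (if a < t then 1 else 0) =
      ∑ i ∈ range t, #(M i) + (if b < t then 1 else 0) := by
  have := sum_congr rfl fun i (_ : i ∈ range t) => card_moveEntry_add hab ha hb i
  simpa only [sum_add_distrib, sum_ite_eq', mem_range] using this

end moveEntry

variable {D s : ℕ} {r c : ℕ → ℕ}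

/-- `M i` is the set of columns holding a one in row `i` of a 0-1 matrix with rows `i < D` and
columns `j < s`. -/
def IsDominatingMatrix (D s : ℕ) (r c : ℕ → ℕ) (M : ℕ → Finset ℕ) : Prop :=
  (∀ i, M i ⊆ range s) ∧ (∀ j < s, #{i ∈ range D | j ∈ M i} = c j) ∧
    ∀ t ≤ D, ∑ i ∈ range t, r i ≤ ∑ i ∈ range t, #(M i)

-- Moving a one to a later row lowers the partial row sums in between, hence this potential.
def rowPotential (D : ℕ) (M : ℕ → Finset ℕ) : ℕ :=
  ∑ t ∈ range (D + 1), ∑ i ∈ range t, #(M i)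

lemma isDominatingMatrix_initial (hc : ∀ j < s, c j ≤ D)
    (hGR : ∀ t ≤ D, ∑ i ∈ range t, r i ≤ ∑ j ∈ range s, min t (c j)) :
    IsDominatingMatrix D s r c fun i => {j ∈ range s | i < c j} := by
  have hcol : ∀ t j, #{i ∈ range t | i < c j} = min t (c j) := fun t j => by
    rw [← card_range (min t (c j))]
    congr 1
    ext i
    simp only [mem_filter, mem_range]
    omega
  refine ⟨fun i => filter_subset _ _, fun j hj => ?_, fun t ht => (hGR t ht).trans_eq ?_⟩
  · simp only [mem_filter, mem_range, hj, true_and]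
    rw [hcol, min_eq_right (hc j hj)]
  · rw [sum_card_eq_sum_card_filter_mem (fun i => filter_subset _ _)]
    refine sum_congr rfl fun j hj => ?_
    simp only [mem_filter, hj, true_and]
    rw [hcol]

lemma IsDominatingMatrix.exists_rowPotential_lt {M : ℕ → Finset ℕ}
    (hM : IsDominatingMatrix D s r c M) (hr : Antitone r)
    (hsum : ∑ i ∈ range D, r i = ∑ j ∈ range s, c j) (hne : ∃ i < D, #(M i) ≠ r i) :
    ∃ M', IsDominatingMatrix D s r c M' ∧ rowPotential D M' < rowPotential D M := by
  obtain ⟨hsub, hcol, hdom⟩ := hM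
  have htot : ∑ i ∈ range D, #(M i) = ∑ i ∈ range D, r i := by
    rw [sum_card_eq_sum_card_filter_mem hsub, hsum]
    exact sum_congr rfl fun j hj => hcol j (mem_range.1 hj)
  obtain ⟨a, b, hab, hbD, ha, hb, hstrict⟩ := exists_surplus_deficit hdom htot hne
  obtain ⟨j, hja, hjb⟩ : ∃ j ∈ M a, j ∉ M b :=
    exists_mem_notMem_of_card_lt_card (by have := hr hab.le; omega)
  have hpart := sum_card_moveEntry_add hab.ne hja hjb
  have hle : ∀ t, ∑ i ∈ range t, #(moveEntry M a b j i) ≤ ∑ i ∈ range t, #(M i) := fun t => by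
    have := hpart t
    split_ifs at this <;> omega
  refine ⟨moveEntry M a b j, ⟨fun i => ?_, fun j' hj' => ?_, fun t ht => ?_⟩, ?_⟩
  · exact moveEntry_subset hsub hja i
  · rw [card_filter_mem_moveEntry hab.ne hja hjb (hab.trans hbD) hbD, hcol j' hj']
  · have h1 := hpart t
    have h2 := hdom t ht
    by_cases hmid : a < t ∧ t ≤ b
    · have := hstrict t hmid.1 hmid.2
      split_ifs at h1 <;> omega
    · split_ifs at h1 <;> omega
  · refine sum_lt_sum (fun t _ => hle t) ⟨a + 1, mem_range.2 (by omega), ?_⟩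
    have h1 := hpart (a + 1)
    have := hstrict (a + 1) (by omega) (by omega)
    rw [if_pos (by omega), if_neg (by omega)] at h1
    omega

theorem exists_matrix_of_galeRyser (hr : Antitone r) (hc : ∀ j < s, c j ≤ D)
    (hGR : ∀ t ≤ D, ∑ i ∈ range t, r i ≤ ∑ j ∈ range s, min t (c j))
    (hsum : ∑ i ∈ range D, r i = ∑ j ∈ range s, c j) :
    ∃ M : ℕ → Finset ℕ, (∀ i, M i ⊆ range s) ∧ (∀ i < D, #(M i) = r i) ∧
      ∀ j < s, #{i ∈ range D | j ∈ M i} = c j := by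
  obtain ⟨M, hM, hmin⟩ := (measure (rowPotential D)).wf.has_min {M | IsDominatingMatrix D s r c M}
    ⟨_, isDominatingMatrix_initial hc hGR⟩
  refine ⟨M, hM.1, fun i hi => ?_, hM.2.1⟩
  by_contra h
  obtain ⟨M', hM', hlt⟩ := IsDominatingMatrix.exists_rowPotential_lt hM hr hsum ⟨i, hi, h⟩
  exact hmin M' hM' hlt

end GaleRyser

lemma card_filter_val_mem {n : ℕ} {A : Finset ℕ} (hA : A ⊆ range n) :
    #{j : Fin n | (j : ℕ) ∈ A} = #A := by
  rw [← card_attachFin A fun m hm => mem_range.1 (hA hm)]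
  congr 1
  ext j
  simp

def splitGraph (D s : ℕ) (M : ℕ → Finset ℕ) : SimpleGraph (Fin D ⊕ Fin s) where
  Adj
    | .inl i, .inl i' => i ≠ i'
    | .inl i, .inr j => (j : ℕ) ∈ M i
    | .inr j, .inl i => (j : ℕ) ∈ M i
    | .inr _, .inr _ => False
  symm := ⟨by rintro (i | j) (i' | j') h <;> simp_all [eq_comm]⟩
  loopless := ⟨by rintro (i | j) h <;> simp_all⟩

instance (D s : ℕ) (M : ℕ → Finset ℕ) : DecidableRel (splitGraph D s M).Adj
  | .inl _, .inl _ => inferInstanceAs (Decidable (_ ≠ _))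
  | .inl _, .inr _ => inferInstanceAs (Decidable (_ ∈ _))
  | .inr _, .inl _ => inferInstanceAs (Decidable (_ ∈ _))
  | .inr _, .inr _ => inferInstanceAs (Decidable False)

namespace splitGraph

variable {D s : ℕ} {M : ℕ → Finset ℕ}

@[simp] lemma adj_inl_inl {i i' : Fin D} : (splitGraph D s M).Adj (.inl i) (.inl i') ↔ i ≠ i' :=
  Iff.rfl

@[simp] lemma adj_inl_inr {i : Fin D} {j : Fin s} :
    (splitGraph D s M).Adj (.inl i) (.inr j) ↔ (j : ℕ) ∈ M i := Iff.rfl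

@[simp] lemma adj_inr_inl {i : Fin D} {j : Fin s} :
    (splitGraph D s M).Adj (.inr j) (.inl i) ↔ (j : ℕ) ∈ M i := Iff.rfl

@[simp] lemma not_adj_inr_inr {j j' : Fin s} : ¬ (splitGraph D s M).Adj (.inr j) (.inr j') :=
  id

lemma degree_inl (hM : ∀ i, M i ⊆ range s) (i : Fin D) :
    (splitGraph D s M).degree (.inl i) = D - 1 + #(M i) := by
  have : (splitGraph D s M).neighborFinset (.inl i) =
      (univ.erase i).disjSum ({j | (j : ℕ) ∈ M i} : Finset (Fin s)) := by
    ext (i' | j) <;> simp [eq_comm]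
  rw [← SimpleGraph.card_neighborFinset_eq_degree, this, card_disjSum,
    card_erase_of_mem (mem_univ i), card_univ, Fintype.card_fin, card_filter_val_mem (hM i)]

lemma degree_inr (j : Fin s) :
    (splitGraph D s M).degree (.inr j) = #{i ∈ range D | (j : ℕ) ∈ M i} := by
  have : (splitGraph D s M).neighborFinset (.inr j) =
      ({i | (j : ℕ) ∈ M i} : Finset (Fin D)).disjSum ∅ := by
    ext (i | j') <;> simp
  rw [← SimpleGraph.card_neighborFinset_eq_degree, this, card_disjSum, card_empty, add_zero,
    ← card_filter_val_mem (filter_subset _ (range D))]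
  congr 1
  ext i
  simp

lemma isSplit : IsSplit (splitGraph D s M) := by
  refine ⟨univ.map .inl, univ.map .inr, fun v => ?_, ?_, ?_, ?_⟩
  · cases v <;> simp
  · simp [disjoint_left]
  · rintro (i | j) hv (i' | j') hw hne <;> simp_all
  · rintro (i | j) hv (i' | j') hw hne <;> simp_all

end splitGraph

namespace IsPartition

variable {π : List ℕ}

lemma sum_Ico_min_eq_of_le_durfee (hπ : IsPartition π) {t : ℕ} (ht : t ≤ durfee π) :
    ∑ i ∈ Ico t π.length, min t (π.getD i 0) = (durfee π - t) * t +
      ∑ j ∈ range (π.length - durfee π), min t (π.getD (durfee π + j) 0) := by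
  rw [← sum_Ico_consecutive _ ht (durfee_le_length π), sum_Ico_eq_sum_range _ (durfee π)]
  congr 1
  rw [sum_congr rfl fun i hi => min_eq_left ?_, sum_const, Nat.card_Ico, smul_eq_mul]
  have := hπ.durfee_le_getD (mem_Ico.1 hi).2
  omega

lemma sum_sub_durfee_add (hπ : IsPartition π) {t : ℕ} (ht : t ≤ durfee π) :
    ∑ i ∈ range t, (π.getD i 0 - (durfee π - 1)) + t * (durfee π - 1) =
      ∑ i ∈ range t, π.getD i 0 := by
  rw [show t * (durfee π - 1) = ∑ _i ∈ range t, (durfee π - 1) by simp, ← sum_add_distrib]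
  refine sum_congr rfl fun i hi => ?_
  have := hπ.durfee_le_getD ((mem_range.1 hi).trans_le ht)
  omega

lemma galeRyser_of_erdosGallaiAt (hπ : IsPartition π) {t : ℕ} (ht : t ≤ durfee π)
    (h : ErdosGallaiAt π t) : ∑ i ∈ range t, (π.getD i 0 - (durfee π - 1)) ≤
      ∑ j ∈ range (π.length - durfee π), min t (π.getD (durfee π + j) 0) := by
  have h1 := hπ.sum_sub_durfee_add ht
  have h2 := hπ.sum_Ico_min_eq_of_le_durfee ht
  have h3 : t * (t - 1) + (durfee π - t) * t = t * (durfee π - 1) := by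
    obtain ⟨k, hk⟩ := Nat.exists_eq_add_of_le ht
    rw [hk, Nat.add_sub_cancel_left]
    rcases t with _ | t
    · simp
    · rw [Nat.add_sub_cancel, show t + 1 + k - 1 = t + k by omega]
      ring
  rw [ErdosGallaiAt] at h
  omega

lemma sum_sub_durfee_eq (hπ : IsPartition π) (h : splitExcess π (durfee π) = 0) :
    ∑ i ∈ range (durfee π), (π.getD i 0 - (durfee π - 1)) =
      ∑ j ∈ range (π.length - durfee π), π.getD (durfee π + j) 0 := by
  have := hπ.sum_sub_durfee_add le_rfl
  rw [splitExcess, sub_sub, sub_eq_zero, ← Nat.cast_add, Nat.cast_inj,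
    sum_Ico_eq_sum_range] at h
  omega

theorem exists_isSplit_hasDegSeq (hπ : IsPartition π)
    (hEG : ∀ t ≤ durfee π, ErdosGallaiAt π t) (hex : splitExcess π (durfee π) = 0) :
    ∃ (V : Type) (_ : Fintype V) (G : SimpleGraph V) (_ : DecidableRel G.Adj),
      IsSplit G ∧ NoIsolated G ∧ HasDegSeq G π := by
  obtain ⟨M, hsub, hrow, hcol⟩ := exists_matrix_of_galeRyser
    (fun _ _ hij => Nat.sub_le_sub_right (hπ.1.getD_le_getD hij) _)
    (fun j _ => hπ.getD_le_durfee (Nat.le_add_right _ j))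
    (fun t ht => hπ.galeRyser_of_erdosGallaiAt ht (hEG t ht)) (hπ.sum_sub_durfee_eq hex)
  let e : Fin (durfee π) ⊕ Fin (π.length - durfee π) ≃ Fin π.length :=
    finSumFinEquiv.trans (finCongr (Nat.add_sub_of_le (durfee_le_length π)))
  have hdeg : ∀ v, (splitGraph _ _ M).degree v = π.getD (e v) 0 := by
    rintro (i | j)
    · have := hπ.durfee_le_getD i.isLt
      rw [splitGraph.degree_inl hsub, hrow i i.isLt]
      simp only [e, Equiv.trans_apply, finSumFinEquiv_apply_left, finCongr_apply, Fin.val_cast,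
        Fin.val_castAdd]
      omega
    · rw [splitGraph.degree_inr, hcol j j.isLt]
      simp only [e, Equiv.trans_apply, finSumFinEquiv_apply_right, finCongr_apply, Fin.val_cast,
        Fin.val_natAdd]
  exact ⟨_, inferInstance, splitGraph _ _ M, inferInstance, splitGraph.isSplit,
    fun v => hdeg v ▸ hπ.getD_pos (e v).isLt, .of_equiv hπ.1 e hdeg⟩

theorem exists_isSplit_hasDegSeq_iff (hπ : IsPartition π) :
    (∃ (V : Type) (_ : Fintype V) (G : SimpleGraph V) (_ : DecidableRel G.Adj),
      IsSplit G ∧ NoIsolated G ∧ HasDegSeq G π) ↔ Majorizes (betaOf π) (alphaOf π) := by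
  refine ⟨fun ⟨_, _, _, _, hs, _, hd⟩ => hπ.majorizes_of_isSplit hs hd, fun h => ?_⟩
  obtain ⟨hEG, hex⟩ := hπ.majorizes_betaOf_alphaOf_iff.1 h
  exact hπ.exists_isSplit_hasDegSeq hEG hex

end IsPartition

/-- A partition π is the degree sequence of some split graph with no isolated
vertices iff [α(π)|β(π)] is an S-block, i.e. iff α(π) and β(π) partition the same integer
and β(π) ⪰ α(π). -/
theorem stmt9 (π : List ℕ) (hπ : IsPartition π) :
    ((∃ (V : Type) (_ : Fintype V) (G : SimpleGraph V) (_ : DecidableRel G.Adj),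
        IsSplit G ∧ NoIsolated G ∧ HasDegSeq G π) ↔
      IsSBlock (alphaOf π).sum (alphaOf π) (betaOf π)) ∧
    ((∃ (V : Type) (_ : Fintype V) (G : SimpleGraph V) (_ : DecidableRel G.Adj),
        IsSplit G ∧ NoIsolated G ∧ HasDegSeq G π) ↔
      Majorizes (betaOf π) (alphaOf π)) :=
  ⟨hπ.exists_isSplit_hasDegSeq_iff.trans ⟨hπ.isSBlock_of_majorizes, fun h => h.2.2.1⟩,
    hπ.exists_isSplit_hasDegSeq_iff⟩
end

section
/- Let [α_1|β_1], [α_2|β_2] ∈ S-Block(n) with [α_1|β_1] ⪰ [α_2|β_2]. If [α_1|β_1] is balanced, then [α_2|β_2] is balanced; equivalently, if [α_2|β_2] is unbalanced, then [α_1|β_1] is unbalanced. -/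
/-!
Majorization can only shorten a partition: the first `len α` parts of `β ⪰ α` already carry
the whole sum, so `β` has no further positive part. Hence in `[α₁|β₁] ⪰ [α₂|β₂]` we get
`len α₁ ≤ len α₂` and `len β₂ ≤ len β₁`, and the excess `len α - len β ∈ {0, 1}` can only grow
from the upper block to the lower one.
-/

theorem Majorizes.length_le {β α : List ℕ} (h : Majorizes β α) (hpos : ∀ x ∈ β, 0 < x) :
    β.length ≤ α.length := by
  by_contra! hlt
  have hprefix : α.sum ≤ (β.take α.length).sum := by
    simpa using h.2 α.length (by omega)
  obtain ⟨y, hy⟩ : ∃ y, y ∈ β.drop α.length :=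
    List.exists_mem_of_ne_nil _ (by simpa using hlt)
  have htail : 0 < (β.drop α.length).sum :=
    (hpos y (List.mem_of_mem_drop hy)).trans_le (List.le_sum_of_mem hy)
  have hsplit := List.sum_take_add_sum_drop β α.length
  have hsum := h.1
  omega

/-- For S-blocks [α₁|β₁] ⪰ [α₂|β₂] in S-Block(n): if [α₁|β₁] is balanced then
so is [α₂|β₂]; equivalently if [α₂|β₂] is unbalanced then so is [α₁|β₁]. -/
theorem stmt10 (n : ℕ) (α₁ β₁ α₂ β₂ : List ℕ)
    (h₁ : IsSBlock n α₁ β₁) (h₂ : IsSBlock n α₂ β₂) (hmaj : BlockMaj α₁ β₁ α₂ β₂) :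
    (α₁.length = β₁.length + 1 → α₂.length = β₂.length + 1) ∧
      (α₂.length = β₂.length → α₁.length = β₁.length) := by
  have hα : α₁.length ≤ α₂.length := hmaj.1.length_le h₁.1.2.1
  have hβ : β₂.length ≤ β₁.length := hmaj.2.length_le h₂.2.1.2.1
  have hexcess₁ := h₁.2.2.2
  have hexcess₂ := h₂.2.2.2
  omega
end

section
/- An element of S-Block(n) is maximal if and only if it has the form [γ|γ] for some γ ∈ Dis(n); that is, the set of maximal elements of S-Block(n) is exactly {[γ|γ] : γ ∈ Dis(n)}. -/
/-! If `[α'|β'] ⪰ [γ|γ]` then `γ ⪰ β' ⪰ α' ⪰ γ`, and majorization is a partial order on lists of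
positive parts, so `α' = β' = γ`. Conversely `[β|β]` is an S-block above `[α|β]`, so a maximal
`[α|β]` has `α = β`. -/

theorem List.eq_of_length_eq_of_sum_take_eq {M : Type*} [AddLeftCancelMonoid M] :
    ∀ {a b : List M}, a.length = b.length →
      (∀ k ≤ a.length, (a.take k).sum = (b.take k).sum) → a = b
  | [], [], _, _ => rfl
  | x :: a, y :: b, hlen, hsum => by
    have hxy : x = y := by simpa using hsum 1 (by simp)
    subst hxy
    have htail : a = b := by
      refine eq_of_length_eq_of_sum_take_eq (by simpa using hlen) fun k hk => ?_
      simpa [List.take_succ_cons] using hsum (k + 1) (by simpa using hk)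
    rw [htail]

namespace Majorizes

theorem refl (a : List ℕ) : Majorizes a a :=
  ⟨rfl, fun _ _ => le_rfl⟩

theorem length_le_s11 {a b : List ℕ} (hb : ∀ x ∈ b, 0 < x) (h : Majorizes b a) :
    b.length ≤ a.length := by
  by_contra! hlt
  have hprefix := h.2 a.length (by omega)
  rw [List.take_length] at hprefix
  have hsplit : b.sum = (b.take a.length).sum + (b.drop a.length).sum := by
    rw [← List.sum_append, List.take_append_drop]
  have hdrop : 0 < (b.drop a.length).sum :=
    List.sum_pos _ (fun x hx => hb x (List.mem_of_mem_drop hx))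
      (by rw [Ne, ← List.length_eq_zero_iff, List.length_drop]; omega)
  have := h.1
  omega

theorem trans {a b c : List ℕ} (hc : ∀ x ∈ c, 0 < x) (hcb : Majorizes c b)
    (hba : Majorizes b a) : Majorizes c a := by
  -- prefix sums are only compared up to the shorter length, so `b` must be at least as long as `c`
  have hlen := hcb.length_le_s11 hc
  exact ⟨hcb.1.trans hba.1, fun k hk => (hba.2 k (by omega)).trans (hcb.2 k (by omega))⟩

theorem antisymm_s11 {a b : List ℕ} (ha : ∀ x ∈ a, 0 < x) (hb : ∀ x ∈ b, 0 < x)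
    (hab : Majorizes a b) (hba : Majorizes b a) : a = b := by
  have hlen : a.length = b.length := le_antisymm (hab.length_le_s11 ha) (hba.length_le_s11 hb)
  refine List.eq_of_length_eq_of_sum_take_eq hlen fun k hk => ?_
  exact le_antisymm (hba.2 k (by omega)) (hab.2 k (by omega))

end Majorizes

/-- An element [α|β] of S-Block(n) is maximal iff it has the form [γ|γ],
i.e. iff α = β. -/
theorem stmt11 (n : ℕ) (α β : List ℕ) (h : IsSBlock n α β) :
    ((∀ α' β', IsSBlock n α' β' → BlockMaj α' β' α β → α' = α ∧ β' = β) ↔ α = β) := by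
  obtain ⟨⟨-, hαpos, -⟩, hβ, hβα, -⟩ := h
  constructor
  · intro hmax
    exact (hmax β β ⟨hβ, hβ, .refl β, .inl rfl⟩ ⟨hβα, .refl β⟩).1.symm
  · rintro rfl α' β' ⟨⟨-, hα'pos, -⟩, ⟨-, hβ'pos, -⟩, hβ'α', -⟩ ⟨hα'α, hαβ'⟩
    have hβ'α : Majorizes β' α := hβ'α'.trans hβ'pos hα'α
    have hβ' : β' = α := (hαβ'.antisymm_s11 hαpos hβ'pos hβ'α).symm
    subst hβ'
    exact ⟨hα'α.antisymm_s11 hα'pos hβ'pos hβ'α', rfl⟩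
end
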